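/- Let n be a nonempty finite type with decidable equality, let ρ : Matrix n n ℂ be positive semidefinite with positive semidefinite square root ρ^{1/2}, and let σ : Matrix n n ℂ be a pseudo-inverse of ρ: σ is positive semidefinite, ρ * σ = σ * ρ, (ρ * σ) * ρ = ρ, and σ * (ρ * σ) = σ. Set P := ρ * σ (the support projection of ρ). Then for all matrices a, b : Matrix n n ℂ, tr(ρ^{1/2} * aᴴ * ρ * b * ρ^{1/2} * σ) = tr(ρ^{1/2} * b * P * aᴴ * ρ^{1/2}). (This is the matrix form of the identity V Δ_ω V† = ρ ⊗ ρ⁻¹ for the modular operator of a not-necessarily-faithful state, equivalently the generalized KMS relation ⟨aω|Δ_ω|bω⟩ = ⟨b†ω|P_ω|a†ω⟩ transported through the GNS isometry V : a|ω⟩ ↦ a ρ^{1/2}.) -/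

import Mathlib

open Matrix ComplexOrder

/-- The positive semidefinite square root of a positive semidefinite matrix
(the definition `Matrix.PosSemidef.sqrt` of the older Mathlib, since removed). -/
noncomputable def Matrix.PosSemidef.sqrt {n 𝕜 : Type*} [Fintype n] [DecidableEq n] [RCLike 𝕜]
    {A : Matrix n n 𝕜} (hA : A.PosSemidef) : Matrix n n 𝕜 :=
  (hA.1.eigenvectorUnitary : Matrix n n 𝕜) *
    diagonal ((↑) ∘ Real.sqrt ∘ hA.1.eigenvalues) *
    (star hA.1.eigenvectorUnitary : Matrix n n 𝕜)

/-! Since `√ρ = cfc Real.sqrt ρ`, it commutes with every matrix commuting with `ρ`, in particular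
with `σ`. Cyclicity of the trace then turns both sides into `tr(aᴴ ρ b ρ σ)`. -/

namespace Matrix.PosSemidef

variable {n 𝕜 : Type*} [Fintype n] [DecidableEq n] [RCLike 𝕜] {A : Matrix n n 𝕜}

theorem sqrt_eq_cfc (hA : A.PosSemidef) : hA.sqrt = cfc Real.sqrt A := by
  rw [hA.1.cfc_eq]
  rfl

theorem sqrt_mul_sqrt_self (hA : A.PosSemidef) : hA.sqrt * hA.sqrt = A := by
  rw [sqrt_eq_cfc, ← cfc_mul .., cfc_congr (g := id), cfc_id ℝ A hA.1.isSelfAdjoint]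
  intro x hx
  obtain ⟨i, rfl⟩ := hA.1.spectrum_real_eq_range_eigenvalues ▸ hx
  exact Real.mul_self_sqrt (hA.eigenvalues_nonneg i)

theorem commute_sqrt_of_commute (hA : A.PosSemidef) {B : Matrix n n 𝕜} (h : Commute A B) :
    Commute hA.sqrt B := by
  rw [sqrt_eq_cfc]
  exact h.cfc_real _

end Matrix.PosSemidef

theorem Matrix.trace_mul_mul_mul_of_commute {n R : Type*} [Fintype n] [CommSemiring R]
    {s t : Matrix n n R} (h : Commute s t) (x : Matrix n n R) :
    (s * x * s * t).trace = (x * (s * s) * t).trace := by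
  calc (s * x * s * t).trace = (s * (x * s * t)).trace := by simp only [Matrix.mul_assoc]
    _ = (x * s * (t * s)).trace := by rw [Matrix.trace_mul_comm, Matrix.mul_assoc]
    _ = (x * (s * s) * t).trace := by simp only [← h.eq, Matrix.mul_assoc]

theorem modular_operator_transport_general
    (n : Type*) [Fintype n] [DecidableEq n]
    (ρ : Matrix n n ℂ) (hρ : ρ.PosSemidef)
    (σ : Matrix n n ℂ)
    (hcomm : ρ * σ = σ * ρ)
    (P : Matrix n n ℂ) (hP : P = ρ * σ)
    (a b : Matrix n n ℂ) :
    (hρ.sqrt * aᴴ * ρ * b * hρ.sqrt * σ).trace =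
      (hρ.sqrt * b * P * aᴴ * hρ.sqrt).trace := by
  have hsqrt : Commute hρ.sqrt σ := hρ.commute_sqrt_of_commute hcomm
  calc (hρ.sqrt * aᴴ * ρ * b * hρ.sqrt * σ).trace
      = (hρ.sqrt * (aᴴ * ρ * b) * hρ.sqrt * σ).trace := by simp only [Matrix.mul_assoc]
    _ = (aᴴ * (ρ * b * ρ * σ)).trace := by
        rw [Matrix.trace_mul_mul_mul_of_commute hsqrt, hρ.sqrt_mul_sqrt_self]
        simp only [Matrix.mul_assoc]
    _ = (ρ * (b * P * aᴴ)).trace := by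
        rw [Matrix.trace_mul_comm, hP]
        simp only [Matrix.mul_assoc]
    _ = (hρ.sqrt * (b * P * aᴴ * hρ.sqrt)).trace := by
        rw [Matrix.trace_mul_comm hρ.sqrt, Matrix.mul_assoc (b * P * aᴴ), hρ.sqrt_mul_sqrt_self,
          Matrix.trace_mul_comm ρ]
    _ = (hρ.sqrt * b * P * aᴴ * hρ.sqrt).trace := by simp only [Matrix.mul_assoc]

/-- Matrix form of `V Δ_ω V† = ρ ⊗ ρ⁻¹` / the generalized KMS relation
`⟨aω|Δ_ω|bω⟩ = ⟨b†ω|P_ω|a†ω⟩` for a not-necessarily-faithful state: if `σ`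
is a positive semidefinite pseudo-inverse of `ρ` and `P = ρσ` is the support
projection, then `tr(√ρ aᴴ ρ b √ρ σ) = tr(√ρ b P aᴴ √ρ)` for all `a, b`. -/
theorem modular_operator_transport
    (n : Type*) [Fintype n] [DecidableEq n] [Nonempty n]
    (ρ : Matrix n n ℂ) (hρ : ρ.PosSemidef)
    (σ : Matrix n n ℂ) (hσ : σ.PosSemidef)
    (hcomm : ρ * σ = σ * ρ)
    (h1 : (ρ * σ) * ρ = ρ) (h2 : σ * (ρ * σ) = σ)
    (P : Matrix n n ℂ) (hP : P = ρ * σ)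
    (a b : Matrix n n ℂ) :
    (hρ.sqrt * aᴴ * ρ * b * hρ.sqrt * σ).trace =
      (hρ.sqrt * b * P * aᴴ * hρ.sqrt).trace :=
  modular_operator_transport_general n ρ hρ σ hcomm P hP a b
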